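/- arXiv:2510.09545 — 2 statements merged into one kernel-verified Lean document; each statement's English description precedes it below -/
import Mathlib

section
/- Let L ∈ ℕ, let V₀, …, V_L and C₀, …, C_L be positive real numbers, and let ε > 0. Define N*_ℓ = (2/ε²)·√(V_ℓ/C_ℓ)·Σ_{ℓ'=0}^{L} √(V_{ℓ'}·C_{ℓ'}) for each ℓ. Then: (i) Σ_{ℓ=0}^{L} V_ℓ/N*_ℓ = ε²/2; (ii) Σ_{ℓ=0}^{L} N*_ℓ·C_ℓ = (2/ε²)·(Σ_{ℓ=0}^{L} √(V_ℓ·C_ℓ))²; and (iii) for every choice of positive real numbers N₀, …, N_L satisfying Σ_{ℓ=0}^{L} V_ℓ/N_ℓ ≤ ε²/2, one has Σ_{ℓ=0}^{L} N_ℓ·C_ℓ ≥ (2/ε²)·(Σ_{ℓ=0}^{L} √(V_ℓ·C_ℓ))². In particular, the allocation N*_ℓ minimizes the total cost Σ_ℓ N_ℓ·C_ℓ among all positive allocations meeting the variance constraint Σ_ℓ V_ℓ/N_ℓ ≤ ε²/2. -/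
/-!
For any positive allocation `N`, Cauchy–Schwarz applied to `√(V C) = √(V / N) · √(N C)` gives
`(Σ √(V C))² ≤ (Σ V / N) · (Σ N C)`, so the variance constraint forces the cost to be at least
`(2 / ε²) (Σ √(V C))²`. Equality in Cauchy–Schwarz holds when `V / N` is proportional to `N C`,
i.e. `N ∝ √(V / C)`; for such an allocation both sums are explicit multiples of `Σ √(V C)`, and the
constant in `N*` is the one making the variance exactly `ε² / 2`.
-/

open Finset

namespace Real

lemma sqrt_div_eq_sqrt_mul_div {c : ℝ} (hc : 0 ≤ c) (v : ℝ) : √(v / c) = √(v * c) / c := by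
  rw [sqrt_div' _ hc, sqrt_mul' _ hc, mul_div_assoc, sqrt_div_self', mul_one_div]

lemma div_sqrt_div {c : ℝ} (hc : 0 ≤ c) (v : ℝ) : v / √(v / c) = √(v * c) := by
  rw [sqrt_div_eq_sqrt_mul_div hc, div_div_eq_mul_div, div_sqrt]

lemma sqrt_div_mul_self {c : ℝ} (hc : 0 < c) (v : ℝ) : √(v / c) * c = √(v * c) := by
  rw [sqrt_div_eq_sqrt_mul_div hc.le, div_mul_cancel₀ _ hc.ne']

end Real

section Allocation

variable {ι : Type*} {s : Finset ι} {V C N : ι → ℝ}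

theorem sum_div_eq_of_eq_mul_sqrt_div (hC : ∀ i ∈ s, 0 ≤ C i) {k : ℝ}
    (hN : ∀ i ∈ s, N i = k * √(V i / C i)) :
    ∑ i ∈ s, V i / N i = (∑ i ∈ s, √(V i * C i)) / k := by
  rw [sum_div]
  refine sum_congr rfl fun i hi => ?_
  rw [hN i hi, div_mul_eq_div_div_swap, Real.div_sqrt_div (hC i hi)]

theorem sum_mul_eq_of_eq_mul_sqrt_div (hC : ∀ i ∈ s, 0 < C i) {k : ℝ}
    (hN : ∀ i ∈ s, N i = k * √(V i / C i)) :
    ∑ i ∈ s, N i * C i = k * ∑ i ∈ s, √(V i * C i) := by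
  rw [mul_sum]
  refine sum_congr rfl fun i hi => ?_
  rw [hN i hi, mul_assoc, Real.sqrt_div_mul_self (hC i hi)]

theorem sq_sum_sqrt_mul_le_sum_div_mul_sum_mul (hV : ∀ i ∈ s, 0 ≤ V i)
    (hC : ∀ i ∈ s, 0 ≤ C i) (hN : ∀ i ∈ s, 0 < N i) :
    (∑ i ∈ s, √(V i * C i)) ^ 2 ≤ (∑ i ∈ s, V i / N i) * ∑ i ∈ s, N i * C i := by
  refine sum_sq_le_sum_mul_sum_of_sq_le_mul s (fun i hi => div_nonneg (hV i hi) (hN i hi).le)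
    (fun i hi => mul_nonneg (hN i hi).le (hC i hi)) fun i hi => le_of_eq ?_
  have hNi := (hN i hi).ne'
  rw [Real.sq_sqrt (mul_nonneg (hV i hi) (hC i hi))]
  field_simp

end Allocation

/-- **Optimality of the MLMC sample allocation.**
With level variances `V ℓ > 0` and per-sample costs `C ℓ > 0`, the allocation
`N*_ℓ = (2/ε²)·√(V_ℓ/C_ℓ)·Σ_{ℓ'} √(V_{ℓ'} C_{ℓ'})` attains estimator variance exactly
`ε²/2`, has total cost `(2/ε²)·(Σ_ℓ √(V_ℓ C_ℓ))²`, and this cost is minimal among all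
positive real allocations meeting the variance constraint `Σ_ℓ V_ℓ/N_ℓ ≤ ε²/2`. -/
theorem mlmc_optimal_allocation
    (L : ℕ) (V C : ℕ → ℝ)
    (hV : ∀ ℓ ≤ L, 0 < V ℓ) (hC : ∀ ℓ ≤ L, 0 < C ℓ)
    (ε : ℝ) (hε : 0 < ε)
    (Nstar : ℕ → ℝ)
    (hNstar : ∀ ℓ ≤ L, Nstar ℓ = (2 / ε ^ 2) * Real.sqrt (V ℓ / C ℓ) *
      ∑ ℓ' ∈ range (L + 1), Real.sqrt (V ℓ' * C ℓ')) :
    (∑ ℓ ∈ range (L + 1), V ℓ / Nstar ℓ = ε ^ 2 / 2) ∧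
    (∑ ℓ ∈ range (L + 1), Nstar ℓ * C ℓ
      = (2 / ε ^ 2) * (∑ ℓ ∈ range (L + 1), Real.sqrt (V ℓ * C ℓ)) ^ 2) ∧
    (∀ N : ℕ → ℝ, (∀ ℓ ≤ L, 0 < N ℓ) →
      (∑ ℓ ∈ range (L + 1), V ℓ / N ℓ ≤ ε ^ 2 / 2) →
      (2 / ε ^ 2) * (∑ ℓ ∈ range (L + 1), Real.sqrt (V ℓ * C ℓ)) ^ 2
        ≤ ∑ ℓ ∈ range (L + 1), N ℓ * C ℓ) := by
  simp only [← Nat.lt_add_one_iff, ← mem_range] at hV hC hNstar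
  set S := ∑ ℓ ∈ range (L + 1), √(V ℓ * C ℓ) with hS_def
  have hS : 0 < S := sum_pos (fun ℓ hℓ => Real.sqrt_pos.mpr (mul_pos (hV ℓ hℓ) (hC ℓ hℓ)))
    nonempty_range_add_one
  have hNstar' : ∀ ℓ ∈ range (L + 1), Nstar ℓ = 2 / ε ^ 2 * S * √(V ℓ / C ℓ) :=
    fun ℓ hℓ => by rw [hNstar ℓ hℓ]; ring
  refine ⟨?_, ?_, fun N hN hvar => ?_⟩
  · rw [sum_div_eq_of_eq_mul_sqrt_div (fun ℓ hℓ => (hC ℓ hℓ).le) hNstar', ← hS_def]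
    field_simp
  · rw [sum_mul_eq_of_eq_mul_sqrt_div hC hNstar']
    ring
  · simp only [← Nat.lt_add_one_iff, ← mem_range] at hN
    have hcost : 0 ≤ ∑ ℓ ∈ range (L + 1), N ℓ * C ℓ :=
      sum_nonneg fun ℓ hℓ => mul_nonneg (hN ℓ hℓ).le (hC ℓ hℓ).le
    calc 2 / ε ^ 2 * S ^ 2
        ≤ 2 / ε ^ 2 * ((∑ ℓ ∈ range (L + 1), V ℓ / N ℓ) * ∑ ℓ ∈ range (L + 1), N ℓ * C ℓ) := by
          gcongr
          exact sq_sum_sqrt_mul_le_sum_div_mul_sum_mul (fun ℓ hℓ => (hV ℓ hℓ).le)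
            (fun ℓ hℓ => (hC ℓ hℓ).le) hN
      _ ≤ 2 / ε ^ 2 * (ε ^ 2 / 2 * ∑ ℓ ∈ range (L + 1), N ℓ * C ℓ) := by gcongr
      _ = ∑ ℓ ∈ range (L + 1), N ℓ * C ℓ := by field_simp
end

section
/- Let a ≥ 2 and I₀ ≥ 1 be integers and set I_ℓ = I₀·a^ℓ. Let α, β, γ, c₁, c₂, c₃ be positive constants with α ≥ (1/2)·min(β, γ), and let (V_ℓ)_{ℓ∈ℕ} and (C_ℓ)_{ℓ∈ℕ} be sequences of nonnegative reals with V_ℓ ≤ c₂·I_ℓ^{−β} and 0 < C_ℓ ≤ c₃·I_ℓ^{γ}. Then there exists a constant c₄ > 0 (depending only on a, I₀, α, β, γ, c₁, c₂, c₃) such that for every ε with 0 < ε < e^{−1} there exist L ∈ ℕ and positive integers N₀, …, N_L satisfying: (i) c₁·I_L^{−α} ≤ ε/√2; (ii) Σ_{ℓ=0}^{L} V_ℓ/N_ℓ ≤ ε²/2; and (iii) Σ_{ℓ=0}^{L} N_ℓ·C_ℓ ≤ c₄·ε^{−2} if β > γ, Σ_{ℓ=0}^{L} N_ℓ·C_ℓ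 ≤ c₄·ε^{−2}·(log ε)² if β = γ, and Σ_{ℓ=0}^{L} N_ℓ·C_ℓ ≤ c₄·ε^{−2−(γ−β)/α} if β < γ. -/
open Finset


private lemma mlmc_geom_lt (r : ℝ) (h0 : 0 ≤ r) (h1 : r < 1) (n : ℕ) :
    ∑ i ∈ range n, r ^ i ≤ 1 / (1 - r) := by
  have h1r : (0:ℝ) < 1 - r := by linarith
  have hgs : ∑ i ∈ range n, r ^ i = (1 - r ^ n) / (1 - r) := by
    rw [geom_sum_eq h1.ne]
    rw [div_eq_div_iff (by linarith) h1r.ne']; ring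
  rw [hgs, div_le_div_iff₀ h1r h1r]
  nlinarith [pow_nonneg h0 n]

private lemma mlmc_geom_gt (r : ℝ) (h1 : 1 < r) (L : ℕ) :
    ∑ i ∈ range (L + 1), r ^ i ≤ r / (r - 1) * r ^ L := by
  have h1r : (0:ℝ) < r - 1 := by linarith
  rw [geom_sum_eq h1.ne', show r / (r - 1) * r ^ L = r ^ L * r / (r-1) by ring,
    ← pow_succ, div_le_div_iff₀ h1r h1r]
  nlinarith [pow_pos (by linarith : (0:ℝ) < r) (L+1)]

private lemma mlmc_pow_comm (A : ℝ) (hA : 0 ≤ A) (t : ℝ) (ℓ : ℕ) :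
    (A ^ ℓ : ℝ) ^ t = (A ^ t) ^ ℓ := by
  rw [← Real.rpow_natCast A ℓ, ← Real.rpow_natCast (A ^ t) ℓ,
    ← Real.rpow_mul hA, ← Real.rpow_mul hA, mul_comm]

private lemma mlmc_sum_rpow_neg (a I₀ : ℕ) (ha : 2 ≤ a) (hI₀ : 1 ≤ I₀) (t : ℝ)
    (ht : t < 0) (L : ℕ) :
    ∑ ℓ ∈ range (L + 1), ((I₀ : ℝ) * (a : ℝ) ^ ℓ) ^ t ≤ 1 / (1 - (a : ℝ) ^ t) := by
  have hA1 : (1:ℝ) < (a:ℝ) := by exact_mod_cast Nat.lt_of_lt_of_le one_lt_two ha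
  have hA0 : (0:ℝ) ≤ (a:ℝ) := by linarith
  have hI1 : (1:ℝ) ≤ (I₀:ℝ) := by exact_mod_cast hI₀
  have hr1 : (a:ℝ) ^ t < 1 := Real.rpow_lt_one_of_one_lt_of_neg hA1 ht
  have hr0 : (0:ℝ) ≤ (a:ℝ) ^ t := (Real.rpow_pos_of_pos (by linarith) t).le
  calc ∑ ℓ ∈ range (L + 1), ((I₀ : ℝ) * (a : ℝ) ^ ℓ) ^ t
      = ∑ ℓ ∈ range (L + 1), (I₀:ℝ) ^ t * ((a:ℝ) ^ t) ^ ℓ := by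
        refine Finset.sum_congr rfl fun ℓ _ => ?_
        rw [Real.mul_rpow (by linarith) (pow_nonneg hA0 ℓ), mlmc_pow_comm _ hA0]
    _ ≤ ∑ ℓ ∈ range (L + 1), 1 * ((a:ℝ) ^ t) ^ ℓ := by
        refine Finset.sum_le_sum fun ℓ _ => ?_
        exact mul_le_mul_of_nonneg_right
          (Real.rpow_le_one_of_one_le_of_nonpos hI1 ht.le) (pow_nonneg hr0 ℓ)
    _ ≤ 1 / (1 - (a:ℝ) ^ t) := by
        simp only [one_mul]
        exact mlmc_geom_lt _ hr0 hr1 _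

private lemma mlmc_sum_rpow_pos (a I₀ : ℕ) (ha : 2 ≤ a) (hI₀ : 1 ≤ I₀) (t : ℝ)
    (ht : 0 < t) (L : ℕ) :
    ∑ ℓ ∈ range (L + 1), ((I₀ : ℝ) * (a : ℝ) ^ ℓ) ^ t
      ≤ (a:ℝ) ^ t / ((a:ℝ) ^ t - 1) * ((I₀ : ℝ) * (a : ℝ) ^ L) ^ t := by
  have hA1 : (1:ℝ) < (a:ℝ) := by exact_mod_cast Nat.lt_of_lt_of_le one_lt_two ha
  have hA0 : (0:ℝ) ≤ (a:ℝ) := by linarith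
  have hI1 : (1:ℝ) ≤ (I₀:ℝ) := by exact_mod_cast hI₀
  have hr1 : 1 < (a:ℝ) ^ t := by
    rw [show (1:ℝ) = (a:ℝ) ^ (0:ℝ) by simp]
    exact Real.rpow_lt_rpow_of_exponent_lt hA1 ht
  have hI0t : (0:ℝ) < (I₀:ℝ) ^ t := Real.rpow_pos_of_pos (by linarith) t
  calc ∑ ℓ ∈ range (L + 1), ((I₀ : ℝ) * (a : ℝ) ^ ℓ) ^ t
      = (I₀:ℝ) ^ t * ∑ ℓ ∈ range (L + 1), ((a:ℝ) ^ t) ^ ℓ := by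
        rw [mul_sum]
        refine Finset.sum_congr rfl fun ℓ _ => ?_
        rw [Real.mul_rpow (by linarith) (pow_nonneg hA0 ℓ), mlmc_pow_comm _ hA0]
    _ ≤ (I₀:ℝ) ^ t * ((a:ℝ) ^ t / ((a:ℝ) ^ t - 1) * ((a:ℝ) ^ t) ^ L) := by
        exact mul_le_mul_of_nonneg_left (mlmc_geom_gt _ hr1 L) hI0t.le
    _ = (a:ℝ) ^ t / ((a:ℝ) ^ t - 1) * ((I₀ : ℝ) * (a : ℝ) ^ L) ^ t := by
        rw [Real.mul_rpow (by linarith) (pow_nonneg hA0 L), mlmc_pow_comm _ hA0]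
        ring

private lemma mlmc_choose_N (ε : ℝ) (hε : 0 < ε) (L : ℕ) (v cc V C : ℕ → ℝ)
    (hv : ∀ ℓ, 0 < v ℓ) (hcc : ∀ ℓ, 0 < cc ℓ)
    (hV0 : ∀ ℓ, 0 ≤ V ℓ) (hVv : ∀ ℓ, V ℓ ≤ v ℓ)
    (hC0 : ∀ ℓ, 0 < C ℓ) (hCcc : ∀ ℓ, C ℓ ≤ cc ℓ) :
    ∃ N : ℕ → ℕ, (∀ ℓ, 0 < N ℓ) ∧
      (∑ ℓ ∈ range (L + 1), V ℓ / (N ℓ : ℝ) ≤ ε ^ 2 / 2) ∧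
      (∑ ℓ ∈ range (L + 1), (N ℓ : ℝ) * C ℓ
        ≤ 2 * (ε ^ 2)⁻¹ * (∑ ℓ ∈ range (L + 1), Real.sqrt (v ℓ * cc ℓ)) ^ 2
          + ∑ ℓ ∈ range (L + 1), cc ℓ) := by
  set w : ℕ → ℝ := fun ℓ => Real.sqrt (v ℓ * cc ℓ) with hw
  have hwpos : ∀ ℓ, 0 < w ℓ := fun ℓ => Real.sqrt_pos.mpr (mul_pos (hv ℓ) (hcc ℓ))
  set S : ℝ := ∑ ℓ ∈ range (L + 1), w ℓ with hS
  have hSpos : 0 < S := Finset.sum_pos (fun ℓ _ => hwpos ℓ) nonempty_range_add_one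
  set x : ℕ → ℝ := fun ℓ => 2 * (ε ^ 2)⁻¹ * S * Real.sqrt (v ℓ / cc ℓ) with hx
  have hxpos : ∀ ℓ, 0 < x ℓ := by
    intro ℓ
    have h1 : 0 < Real.sqrt (v ℓ / cc ℓ) := Real.sqrt_pos.mpr (div_pos (hv ℓ) (hcc ℓ))
    positivity
  have hkey : ∀ ℓ, Real.sqrt (v ℓ / cc ℓ) * w ℓ = v ℓ := by
    intro ℓ
    rw [hw, ← Real.sqrt_mul (div_nonneg (hv ℓ).le (hcc ℓ).le),
      show v ℓ / cc ℓ * (v ℓ * cc ℓ) = (v ℓ) ^ 2 by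
        field_simp [(hcc ℓ).ne']]
    exact Real.sqrt_sq (hv ℓ).le
  have hkey2 : ∀ ℓ, Real.sqrt (v ℓ / cc ℓ) * cc ℓ = w ℓ := by
    intro ℓ
    have hw2 : w ℓ * w ℓ = v ℓ * cc ℓ := Real.mul_self_sqrt (mul_pos (hv ℓ) (hcc ℓ)).le
    refine mul_right_cancel₀ (hwpos ℓ).ne' ?_
    calc Real.sqrt (v ℓ / cc ℓ) * cc ℓ * w ℓ
        = Real.sqrt (v ℓ / cc ℓ) * w ℓ * cc ℓ := by ring
      _ = v ℓ * cc ℓ := by rw [hkey ℓ]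
      _ = w ℓ * w ℓ := hw2.symm
  refine ⟨fun ℓ => ⌈x ℓ⌉₊, fun ℓ => Nat.ceil_pos.mpr (hxpos ℓ), ?_, ?_⟩
  · -- variance
    have hterm : ∀ ℓ ∈ range (L + 1), V ℓ / (⌈x ℓ⌉₊ : ℝ) ≤ ε ^ 2 / (2 * S) * w ℓ := by
      intro ℓ _
      have h1 : V ℓ / (⌈x ℓ⌉₊ : ℝ) ≤ v ℓ / x ℓ :=
        div_le_div₀ (hv ℓ).le (hVv ℓ) (hxpos ℓ) (Nat.le_ceil _)
      refine h1.trans (le_of_eq ?_)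
      rw [div_eq_iff (hxpos ℓ).ne', hx]
      have hε2 : (ε ^ 2) ≠ 0 := by positivity
      field_simp
      linear_combination (-1) * hkey ℓ
    calc ∑ ℓ ∈ range (L + 1), V ℓ / (⌈x ℓ⌉₊ : ℝ)
        ≤ ∑ ℓ ∈ range (L + 1), ε ^ 2 / (2 * S) * w ℓ := Finset.sum_le_sum hterm
      _ = ε ^ 2 / (2 * S) * S := by rw [← mul_sum]
      _ = ε ^ 2 / 2 := by field_simp
  · -- cost
    have hterm : ∀ ℓ ∈ range (L + 1), (⌈x ℓ⌉₊ : ℝ) * C ℓ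
        ≤ 2 * (ε ^ 2)⁻¹ * S * w ℓ + cc ℓ := by
      intro ℓ _
      have h1 : (⌈x ℓ⌉₊ : ℝ) ≤ x ℓ + 1 := (Nat.ceil_lt_add_one (hxpos ℓ).le).le
      calc (⌈x ℓ⌉₊ : ℝ) * C ℓ ≤ (x ℓ + 1) * cc ℓ := by
            refine mul_le_mul h1 (hCcc ℓ) (hC0 ℓ).le (by positivity)
        _ = 2 * (ε ^ 2)⁻¹ * S * (Real.sqrt (v ℓ / cc ℓ) * cc ℓ) + cc ℓ := by
            rw [hx]; ring
        _ = 2 * (ε ^ 2)⁻¹ * S * w ℓ + cc ℓ := by rw [hkey2 ℓ]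
    calc ∑ ℓ ∈ range (L + 1), (⌈x ℓ⌉₊ : ℝ) * C ℓ
        ≤ ∑ ℓ ∈ range (L + 1), (2 * (ε ^ 2)⁻¹ * S * w ℓ + cc ℓ) := Finset.sum_le_sum hterm
      _ = 2 * (ε ^ 2)⁻¹ * S * S + ∑ ℓ ∈ range (L + 1), cc ℓ := by
          rw [Finset.sum_add_distrib, ← mul_sum]
      _ = 2 * (ε ^ 2)⁻¹ * S ^ 2 + ∑ ℓ ∈ range (L + 1), cc ℓ := by ring

set_option maxHeartbeats 2000000 in
/-- **Deterministic core of the MLMC complexity theorem.**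
Given level variances `V_ℓ ≤ c₂ I_ℓ^{−β}` and per-sample costs `0 < C_ℓ ≤ c₃ I_ℓ^{γ}`
on grids `I_ℓ = I₀ aˡ`, with `α ≥ min(β,γ)/2`, there is a constant `c₄` such that for
every `0 < ε < e⁻¹` one can choose a number of levels `L` and sample counts `N_ℓ` with
(i) bias bound `c₁ I_L^{−α} ≤ ε/√2`, (ii) estimator variance `Σ_ℓ V_ℓ/N_ℓ ≤ ε²/2`, and
(iii) total cost bounded by `c₄ ε⁻²`, `c₄ ε⁻² (log ε)²`, or `c₄ ε^{−2−(γ−β)/α}`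
according as `β > γ`, `β = γ`, or `β < γ`. -/
theorem mlmc_complexity_deterministic_core
    (a I₀ : ℕ) (ha : 2 ≤ a) (hI₀ : 1 ≤ I₀)
    (α β γ c₁ c₂ c₃ : ℝ)
    (hα : 0 < α) (hβ : 0 < β) (hγ : 0 < γ)
    (hc₁ : 0 < c₁) (hc₂ : 0 < c₂) (hc₃ : 0 < c₃)
    (hαβγ : α ≥ (1 / 2) * min β γ)
    (V C : ℕ → ℝ)
    (hV0 : ∀ ℓ, 0 ≤ V ℓ)
    (hV : ∀ ℓ : ℕ, V ℓ ≤ c₂ * ((I₀ : ℝ) * (a : ℝ) ^ ℓ) ^ (-β))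
    (hC0 : ∀ ℓ, 0 < C ℓ)
    (hC : ∀ ℓ : ℕ, C ℓ ≤ c₃ * ((I₀ : ℝ) * (a : ℝ) ^ ℓ) ^ (γ : ℝ)) :
    ∃ c₄ : ℝ, 0 < c₄ ∧
      ∀ ε : ℝ, 0 < ε → ε < Real.exp (-1) →
        ∃ (L : ℕ) (N : ℕ → ℕ), (∀ ℓ ≤ L, 0 < N ℓ) ∧
          (c₁ * ((I₀ : ℝ) * (a : ℝ) ^ L) ^ (-α) ≤ ε / Real.sqrt 2) ∧
          (∑ ℓ ∈ range (L + 1), V ℓ / (N ℓ : ℝ) ≤ ε ^ 2 / 2) ∧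
          ((β > γ →
              ∑ ℓ ∈ range (L + 1), (N ℓ : ℝ) * C ℓ ≤ c₄ * ε ^ (-2 : ℝ)) ∧
           (β = γ →
              ∑ ℓ ∈ range (L + 1), (N ℓ : ℝ) * C ℓ
                ≤ c₄ * ε ^ (-2 : ℝ) * (Real.log ε) ^ 2) ∧
           (β < γ →
              ∑ ℓ ∈ range (L + 1), (N ℓ : ℝ) * C ℓ
                ≤ c₄ * ε ^ (-2 - (γ - β) / α))) := by
  have hA1 : (1:ℝ) < (a:ℝ) := by exact_mod_cast Nat.lt_of_lt_of_le one_lt_two ha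
  have hA2 : (2:ℝ) ≤ (a:ℝ) := by exact_mod_cast ha
  have hA0 : (0:ℝ) < (a:ℝ) := by linarith
  have hI1 : (1:ℝ) ≤ (I₀:ℝ) := by exact_mod_cast hI₀
  have hI0 : (0:ℝ) < (I₀:ℝ) := by linarith
  have hKpos : ∀ ℓ : ℕ, (0:ℝ) < (I₀:ℝ) * (a:ℝ) ^ ℓ :=
    fun ℓ => mul_pos hI0 (pow_pos hA0 ℓ)
  have hsc : (0:ℝ) < Real.sqrt 2 * c₁ := mul_pos (Real.sqrt_pos.mpr two_pos) hc₁
  set M : ℝ := (I₀:ℝ) + (a:ℝ) * (Real.sqrt 2 * c₁) ^ ((1:ℝ)/α) with hMdef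
  have hM1 : 1 ≤ M := by
    have : (0:ℝ) < (a:ℝ) * (Real.sqrt 2 * c₁) ^ ((1:ℝ)/α) :=
      mul_pos hA0 (Real.rpow_pos_of_pos hsc _)
    rw [hMdef]; linarith
  have hMpos : (0:ℝ) < M := by linarith
  have hlog2 : (0:ℝ) < Real.log 2 := Real.log_pos one_lt_two
  have hlogM : (0:ℝ) ≤ Real.log M := Real.log_nonneg hM1
  set B : ℝ := (Real.log M + 1/α) / Real.log 2 + 1 with hBdef
  have hBpos : (0:ℝ) < B := by positivity
  have hrAγ : (1:ℝ) < (a:ℝ) ^ (γ:ℝ) := by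
    rw [show (1:ℝ) = (a:ℝ) ^ (0:ℝ) by simp]
    exact Real.rpow_lt_rpow_of_exponent_lt hA1 hγ
  set G : ℝ := (a:ℝ) ^ (γ:ℝ) / ((a:ℝ) ^ (γ:ℝ) - 1) with hGdef
  have hGpos : (0:ℝ) < G := div_pos (by linarith) (by linarith)
  have hMγpos : (0:ℝ) < M ^ (γ:ℝ) := Real.rpow_pos_of_pos hMpos _
  set Q : ℝ := c₃ * G * M ^ (γ:ℝ) with hQdef
  have hQpos : (0:ℝ) < Q := by positivity
  set r : ℝ := (a:ℝ) ^ ((γ - β)/2) with hrdef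
  have hr0 : (0:ℝ) < r := Real.rpow_pos_of_pos hA0 _
  set P₁ : ℝ := 2*c₂*c₃*(1/(1-r))^2 + Q with hP₁def
  set P₂ : ℝ := 2*c₂*c₃*B^2 + Q with hP₂def
  set P₃ : ℝ := 2*c₂*c₃*(r/(r-1))^2 * M^(γ-β) + Q with hP₃def
  have hP₂pos : (0:ℝ) < P₂ := by positivity
  refine ⟨max P₁ (max P₂ P₃),
    lt_of_lt_of_le hP₂pos ((le_max_left _ _).trans (le_max_right _ _)), ?_⟩
  intro ε hε hεe
  have hε1 : ε < 1 := hεe.trans (by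
    rw [show (1:ℝ) = Real.exp 0 by simp]
    exact Real.exp_lt_exp.mpr (by norm_num))
  have hlε : 1 ≤ -Real.log ε := by
    have h := Real.log_lt_log hε hεe
    rw [Real.log_exp] at h; linarith
  -- choice of L
  have hXpos : (0:ℝ) < (Real.sqrt 2 * c₁ / ε) ^ ((1:ℝ)/α) :=
    Real.rpow_pos_of_pos (div_pos hsc hε) _
  have hexL : ∃ n : ℕ, (Real.sqrt 2 * c₁ / ε) ^ ((1:ℝ)/α) ≤ (I₀:ℝ) * (a:ℝ) ^ n := by
    obtain ⟨n, hn⟩ := pow_unbounded_of_one_lt ((Real.sqrt 2 * c₁ / ε) ^ ((1:ℝ)/α)) hA1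
    exact ⟨n, hn.le.trans (le_mul_of_one_le_left (pow_pos hA0 n).le hI1)⟩
  obtain ⟨L, hXL, hLmin⟩ :
      ∃ L : ℕ, (Real.sqrt 2 * c₁ / ε) ^ ((1:ℝ)/α) ≤ (I₀:ℝ) * (a:ℝ) ^ L ∧
        ∀ m < L, ¬ ((Real.sqrt 2 * c₁ / ε) ^ ((1:ℝ)/α) ≤ (I₀:ℝ) * (a:ℝ) ^ m) :=
    ⟨Nat.find hexL, Nat.find_spec hexL, fun m hm => Nat.find_min hexL hm⟩
  have hbias : c₁ * ((I₀:ℝ) * (a:ℝ) ^ L) ^ (-α) ≤ ε / Real.sqrt 2 := by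
    have h1 : ((I₀:ℝ) * (a:ℝ) ^ L) ^ (-α)
        ≤ (((Real.sqrt 2 * c₁ / ε) ^ ((1:ℝ)/α)) : ℝ) ^ (-α) :=
      Real.rpow_le_rpow_of_nonpos hXpos hXL (neg_nonpos.mpr hα.le)
    have h2 : (((Real.sqrt 2 * c₁ / ε) ^ ((1:ℝ)/α)) : ℝ) ^ (-α)
        = ε / (Real.sqrt 2 * c₁) := by
      rw [← Real.rpow_mul (div_pos hsc hε).le,
        show (1:ℝ)/α * (-α) = -1 by field_simp [hα.ne'],
        Real.rpow_neg_one, inv_div]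
    calc c₁ * ((I₀:ℝ) * (a:ℝ) ^ L) ^ (-α)
        ≤ c₁ * (ε / (Real.sqrt 2 * c₁)) := by
          rw [← h2]; exact mul_le_mul_of_nonneg_left h1 hc₁.le
      _ = ε / Real.sqrt 2 := by
          field_simp [hc₁.ne']
  have hεexp1 : 1 ≤ ε ^ (-(1/α) : ℝ) :=
    Real.one_le_rpow_of_pos_of_le_one_of_nonpos hε hε1.le
      (neg_nonpos.mpr (by positivity))
  have hKM : (I₀:ℝ) * (a:ℝ) ^ L ≤ M * ε ^ (-(1/α) : ℝ) := by
    rcases Nat.eq_zero_or_pos L with h0 | hposL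
    · rw [h0]
      simp only [pow_zero, mul_one]
      have hIM : (I₀:ℝ) ≤ M := by
        rw [hMdef]
        have : (0:ℝ) < (a:ℝ) * (Real.sqrt 2 * c₁) ^ ((1:ℝ)/α) :=
          mul_pos hA0 (Real.rpow_pos_of_pos hsc _)
        linarith
      calc (I₀:ℝ) = (I₀:ℝ) * 1 := (mul_one _).symm
        _ ≤ M * ε ^ (-(1/α) : ℝ) := mul_le_mul hIM hεexp1 zero_le_one hMpos.le
    · have hnot : ¬ ((Real.sqrt 2 * c₁ / ε) ^ ((1:ℝ)/α) ≤ (I₀:ℝ) * (a:ℝ) ^ (L - 1)) :=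
        hLmin (L - 1) (by omega)
      push_neg at hnot
      have hstep : (I₀:ℝ) * (a:ℝ) ^ L = (a:ℝ) * ((I₀:ℝ) * (a:ℝ) ^ (L - 1)) := by
        conv_lhs => rw [show L = (L - 1) + 1 by omega]
        rw [pow_succ]; ring
      have hXsplit : (Real.sqrt 2 * c₁ / ε) ^ ((1:ℝ)/α)
          = (Real.sqrt 2 * c₁) ^ ((1:ℝ)/α) * ε ^ (-(1/α) : ℝ) := by
        rw [Real.div_rpow hsc.le hε.le, Real.rpow_neg hε.le, div_eq_mul_inv]
      calc (I₀:ℝ) * (a:ℝ) ^ L = (a:ℝ) * ((I₀:ℝ) * (a:ℝ) ^ (L - 1)) := hstep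
        _ ≤ (a:ℝ) * ((Real.sqrt 2 * c₁ / ε) ^ ((1:ℝ)/α)) :=
            mul_le_mul_of_nonneg_left hnot.le hA0.le
        _ = ((a:ℝ) * (Real.sqrt 2 * c₁) ^ ((1:ℝ)/α)) * ε ^ (-(1/α) : ℝ) := by
            rw [hXsplit]; ring
        _ ≤ M * ε ^ (-(1/α) : ℝ) := by
            refine mul_le_mul_of_nonneg_right ?_ (Real.rpow_pos_of_pos hε _).le
            rw [hMdef]; linarith
  have hLB : (L:ℝ) + 1 ≤ B * (-Real.log ε) := by
    have h2L : (2:ℝ) ^ L ≤ M * ε ^ (-(1/α) : ℝ) := by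
      calc (2:ℝ) ^ L ≤ (a:ℝ) ^ L := pow_le_pow_left₀ (by norm_num) hA2 L
        _ ≤ (I₀:ℝ) * (a:ℝ) ^ L := le_mul_of_one_le_left (pow_pos hA0 L).le hI1
        _ ≤ _ := hKM
    have hlog := Real.log_le_log (by positivity) h2L
    rw [Real.log_pow, Real.log_mul hMpos.ne' (Real.rpow_pos_of_pos hε _).ne',
      Real.log_rpow hε] at hlog
    have hBb : B * Real.log 2 = Real.log M + 1/α + Real.log 2 := by
      rw [hBdef]; field_simp
    have e1 : Real.log M ≤ Real.log M * (-Real.log ε) :=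
      le_mul_of_one_le_right hlogM hlε
    have e2 : Real.log 2 ≤ Real.log 2 * (-Real.log ε) :=
      le_mul_of_one_le_right hlog2.le hlε
    have e3 : (L:ℝ) * Real.log 2 ≤ Real.log M + (1/α) * (-Real.log ε) := by
      have : (-(1/α)) * Real.log ε = (1/α) * (-Real.log ε) := by ring
      linarith [hlog]
    have key : ((L:ℝ) + 1) * Real.log 2 ≤ (B * (-Real.log ε)) * Real.log 2 := by
      calc ((L:ℝ) + 1) * Real.log 2 = (L:ℝ) * Real.log 2 + Real.log 2 := by ring
        _ ≤ Real.log M + (1/α) * (-Real.log ε) + Real.log 2 := by linarith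
        _ ≤ Real.log M * (-Real.log ε) + (1/α) * (-Real.log ε)
              + Real.log 2 * (-Real.log ε) := by
            have e4 : (1/α) * (-Real.log ε) ≤ (1/α) * (-Real.log ε) := le_refl _
            linarith
        _ = (Real.log M + 1/α + Real.log 2) * (-Real.log ε) := by ring
        _ = (B * Real.log 2) * (-Real.log ε) := by rw [hBb]
        _ = (B * (-Real.log ε)) * Real.log 2 := by ring
    exact le_of_mul_le_mul_right key hlog2
  obtain ⟨N, hNpos, hNvar, hNcost⟩ :=
    mlmc_choose_N ε hε L (fun ℓ => c₂ * ((I₀:ℝ) * (a:ℝ) ^ ℓ) ^ (-β))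
      (fun ℓ => c₃ * ((I₀:ℝ) * (a:ℝ) ^ ℓ) ^ (γ:ℝ)) V C
      (fun ℓ => mul_pos hc₂ (Real.rpow_pos_of_pos (hKpos ℓ) _))
      (fun ℓ => mul_pos hc₃ (Real.rpow_pos_of_pos (hKpos ℓ) _))
      hV0 hV hC0 hC
  beta_reduce at hNcost
  have hc₂c₃ : (0:ℝ) < c₂ * c₃ := mul_pos hc₂ hc₃
  have hwℓ : ∀ ℓ : ℕ,
      Real.sqrt (c₂ * ((I₀:ℝ) * (a:ℝ) ^ ℓ) ^ (-β) * (c₃ * ((I₀:ℝ) * (a:ℝ) ^ ℓ) ^ (γ:ℝ)))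
        = Real.sqrt (c₂ * c₃) * ((I₀:ℝ) * (a:ℝ) ^ ℓ) ^ ((γ - β)/2) := by
    intro ℓ
    have harg : c₂ * ((I₀:ℝ) * (a:ℝ) ^ ℓ) ^ (-β) * (c₃ * ((I₀:ℝ) * (a:ℝ) ^ ℓ) ^ (γ:ℝ))
        = c₂ * c₃ * ((I₀:ℝ) * (a:ℝ) ^ ℓ) ^ (γ - β) := by
      rw [show γ - β = -β + γ by ring, Real.rpow_add (hKpos ℓ)]; ring
    rw [harg, Real.sqrt_mul hc₂c₃.le,
      Real.sqrt_eq_rpow (((I₀:ℝ) * (a:ℝ) ^ ℓ) ^ (γ - β)),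
      ← Real.rpow_mul (hKpos ℓ).le, show (γ - β) * (1/2) = (γ - β)/2 by ring]
  have hSsq : (∑ ℓ ∈ range (L + 1),
        Real.sqrt (c₂ * ((I₀:ℝ) * (a:ℝ) ^ ℓ) ^ (-β) * (c₃ * ((I₀:ℝ) * (a:ℝ) ^ ℓ) ^ (γ:ℝ)))) ^ 2
      = c₂ * c₃ * (∑ ℓ ∈ range (L + 1), ((I₀:ℝ) * (a:ℝ) ^ ℓ) ^ ((γ - β)/2)) ^ 2 := by
    rw [Finset.sum_congr rfl fun ℓ _ => hwℓ ℓ, ← mul_sum, mul_pow,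
      Real.sq_sqrt hc₂c₃.le]
  rw [hSsq] at hNcost
  set T : ℝ := ∑ ℓ ∈ range (L + 1), ((I₀:ℝ) * (a:ℝ) ^ ℓ) ^ ((γ - β)/2) with hTdef
  have hT0 : (0:ℝ) ≤ T :=
    Finset.sum_nonneg fun ℓ _ => (Real.rpow_pos_of_pos (hKpos ℓ) _).le
  have hccb : ∑ ℓ ∈ range (L + 1), c₃ * ((I₀:ℝ) * (a:ℝ) ^ ℓ) ^ (γ:ℝ)
      ≤ Q * ε ^ (-(γ/α)) := by
    have hKLγ : ((I₀:ℝ) * (a:ℝ) ^ L) ^ (γ:ℝ) ≤ M ^ (γ:ℝ) * ε ^ (-(γ/α)) := by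
      calc ((I₀:ℝ) * (a:ℝ) ^ L) ^ (γ:ℝ) ≤ (M * ε ^ (-(1/α) : ℝ)) ^ (γ:ℝ) :=
            Real.rpow_le_rpow (hKpos L).le hKM hγ.le
        _ = M ^ (γ:ℝ) * ε ^ (-(γ/α)) := by
            rw [Real.mul_rpow hMpos.le (Real.rpow_pos_of_pos hε _).le,
              ← Real.rpow_mul hε.le, show -(1/α) * γ = -(γ/α) by ring]
    calc ∑ ℓ ∈ range (L + 1), c₃ * ((I₀:ℝ) * (a:ℝ) ^ ℓ) ^ (γ:ℝ)
        = c₃ * ∑ ℓ ∈ range (L + 1), ((I₀:ℝ) * (a:ℝ) ^ ℓ) ^ (γ:ℝ) := by rw [mul_sum]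
      _ ≤ c₃ * ((a:ℝ) ^ (γ:ℝ) / ((a:ℝ) ^ (γ:ℝ) - 1) * ((I₀:ℝ) * (a:ℝ) ^ L) ^ (γ:ℝ)) :=
          mul_le_mul_of_nonneg_left (mlmc_sum_rpow_pos a I₀ ha hI₀ γ hγ L) hc₃.le
      _ ≤ c₃ * (G * (M ^ (γ:ℝ) * ε ^ (-(γ/α)))) := by
          rw [hGdef]
          exact mul_le_mul_of_nonneg_left
            (mul_le_mul_of_nonneg_left hKLγ (by rw [← hGdef]; exact hGpos.le)) hc₃.le
      _ = Q * ε ^ (-(γ/α)) := by rw [hQdef]; ring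
  have hεmono : ∀ p q : ℝ, p ≤ q → ε ^ q ≤ ε ^ p :=
    fun p q h => Real.rpow_le_rpow_of_exponent_ge hε hε1.le h
  have hε2 : (ε ^ 2)⁻¹ = ε ^ (-2 : ℝ) := by
    rw [show ((-2):ℝ) = -((2:ℕ):ℝ) by norm_num, Real.rpow_neg hε.le, Real.rpow_natCast]
  rw [hε2] at hNcost
  have hE0 : (0:ℝ) ≤ ε ^ (-2:ℝ) := (Real.rpow_pos_of_pos hε _).le
  refine ⟨L, N, fun ℓ _ => hNpos ℓ, hbias, hNvar, ?_, ?_, ?_⟩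
  · -- case β > γ
    intro hgt
    have hs : (γ - β)/2 < 0 := by linarith
    have hβ2α : γ ≤ 2 * α := by
      have hmin : min β γ = γ := min_eq_right hgt.le
      rw [hmin] at hαβγ; linarith
    have hT2 : T ^ 2 ≤ (1/(1 - r)) ^ 2 := by
      refine pow_le_pow_left₀ hT0 ?_ 2
      rw [hrdef, hTdef]
      exact mlmc_sum_rpow_neg a I₀ ha hI₀ _ hs L
    have hεγ : ε ^ (-(γ/α)) ≤ ε ^ (-2:ℝ) := by
      refine hεmono _ _ ?_
      have h2 : γ/α ≤ 2 := (div_le_iff₀ hα).mpr (by linarith)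
      linarith
    calc ∑ ℓ ∈ range (L + 1), (N ℓ : ℝ) * C ℓ
        ≤ 2 * ε ^ (-2:ℝ) * (c₂ * c₃ * T ^ 2)
            + ∑ ℓ ∈ range (L + 1), c₃ * ((I₀:ℝ) * (a:ℝ) ^ ℓ) ^ (γ:ℝ) := hNcost
      _ ≤ 2 * ε ^ (-2:ℝ) * (c₂ * c₃ * (1/(1 - r)) ^ 2) + Q * ε ^ (-2:ℝ) := by
          refine add_le_add ?_
            (hccb.trans (mul_le_mul_of_nonneg_left hεγ hQpos.le))
          exact mul_le_mul_of_nonneg_left (mul_le_mul_of_nonneg_left hT2 hc₂c₃.le)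
            (by positivity)
      _ = P₁ * ε ^ (-2:ℝ) := by rw [hP₁def]; ring
      _ ≤ max P₁ (max P₂ P₃) * ε ^ (-2:ℝ) :=
          mul_le_mul_of_nonneg_right (le_max_left _ _) hE0
  · -- case β = γ
    intro heq
    have hβ2α : γ ≤ 2 * α := by
      have hmin : min β γ = γ := by rw [heq, min_self]
      rw [hmin] at hαβγ; linarith
    have hTeq : T = (L:ℝ) + 1 := by
      rw [hTdef]
      calc ∑ ℓ ∈ range (L + 1), ((I₀:ℝ) * (a:ℝ) ^ ℓ) ^ ((γ - β)/2)
          = ∑ ℓ ∈ range (L + 1), (1:ℝ) := by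
            refine Finset.sum_congr rfl fun ℓ _ => ?_
            rw [show (γ - β)/2 = 0 by rw [heq]; ring, Real.rpow_zero]
        _ = (L:ℝ) + 1 := by
            rw [Finset.sum_const, Finset.card_range, nsmul_eq_mul, mul_one]
            push_cast; ring
    have hlogsq : 1 ≤ (Real.log ε) ^ 2 := by
      have h := mul_le_mul hlε hlε (by norm_num) (by linarith)
      have h2 : (-Real.log ε) * (-Real.log ε) = (Real.log ε) ^ 2 := by ring
      linarith
    have hT2 : T ^ 2 ≤ B ^ 2 * (Real.log ε) ^ 2 := by
      rw [hTeq]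
      calc ((L:ℝ) + 1) ^ 2 ≤ (B * (-Real.log ε)) ^ 2 := by
            refine pow_le_pow_left₀ (by positivity) hLB 2
        _ = B ^ 2 * (Real.log ε) ^ 2 := by ring
    have hεγ : ε ^ (-(γ/α)) ≤ ε ^ (-2:ℝ) := by
      refine hεmono _ _ ?_
      have h2 : γ/α ≤ 2 := (div_le_iff₀ hα).mpr (by linarith)
      linarith
    calc ∑ ℓ ∈ range (L + 1), (N ℓ : ℝ) * C ℓ
        ≤ 2 * ε ^ (-2:ℝ) * (c₂ * c₃ * T ^ 2)
            + ∑ ℓ ∈ range (L + 1), c₃ * ((I₀:ℝ) * (a:ℝ) ^ ℓ) ^ (γ:ℝ) := hNcost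
      _ ≤ 2 * ε ^ (-2:ℝ) * (c₂ * c₃ * (B ^ 2 * (Real.log ε) ^ 2))
            + Q * (ε ^ (-2:ℝ) * (Real.log ε) ^ 2) := by
          refine add_le_add (mul_le_mul_of_nonneg_left
            (mul_le_mul_of_nonneg_left hT2 hc₂c₃.le) (by positivity)) ?_
          refine (hccb.trans (mul_le_mul_of_nonneg_left hεγ hQpos.le)).trans ?_
          exact mul_le_mul_of_nonneg_left (le_mul_of_one_le_right hE0 hlogsq) hQpos.le
      _ = P₂ * ε ^ (-2:ℝ) * (Real.log ε) ^ 2 := by rw [hP₂def]; ring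
      _ ≤ max P₁ (max P₂ P₃) * ε ^ (-2:ℝ) * (Real.log ε) ^ 2 := by
          refine mul_le_mul_of_nonneg_right
            (mul_le_mul_of_nonneg_right ((le_max_left _ _).trans (le_max_right _ _)) hE0)
            (sq_nonneg _)
  · -- case β < γ
    intro hlt
    have hs : (0:ℝ) < (γ - β)/2 := by linarith
    have hβ2α : β ≤ 2 * α := by
      have hmin : min β γ = β := min_eq_left hlt.le
      rw [hmin] at hαβγ; linarith
    have hr1 : 1 < r := by
      rw [hrdef, show (1:ℝ) = (a:ℝ) ^ (0:ℝ) by simp]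
      exact Real.rpow_lt_rpow_of_exponent_lt hA1 hs
    have hKL2 : (((I₀:ℝ) * (a:ℝ) ^ L) ^ ((γ - β)/2)) ^ 2
        = ((I₀:ℝ) * (a:ℝ) ^ L) ^ (γ - β) := by
      rw [sq, ← Real.rpow_add (hKpos L)]; congr 1; ring
    have hKLγβ : ((I₀:ℝ) * (a:ℝ) ^ L) ^ (γ - β) ≤ M ^ (γ - β) * ε ^ (-((γ - β)/α)) := by
      calc ((I₀:ℝ) * (a:ℝ) ^ L) ^ (γ - β) ≤ (M * ε ^ (-(1/α) : ℝ)) ^ (γ - β) :=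
            Real.rpow_le_rpow (hKpos L).le hKM (by linarith)
        _ = M ^ (γ - β) * ε ^ (-((γ - β)/α)) := by
            rw [Real.mul_rpow hMpos.le (Real.rpow_pos_of_pos hε _).le,
              ← Real.rpow_mul hε.le, show -(1/α) * (γ - β) = -((γ - β)/α) by ring]
    have hT2 : T ^ 2 ≤ (r/(r - 1)) ^ 2 * (M ^ (γ - β) * ε ^ (-((γ - β)/α))) := by
      calc T ^ 2 ≤ (r/(r - 1) * ((I₀:ℝ) * (a:ℝ) ^ L) ^ ((γ - β)/2)) ^ 2 := by
            refine pow_le_pow_left₀ hT0 ?_ 2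
            rw [hrdef, hTdef]
            exact mlmc_sum_rpow_pos a I₀ ha hI₀ _ hs L
        _ = (r/(r - 1)) ^ 2 * (((I₀:ℝ) * (a:ℝ) ^ L) ^ ((γ - β)/2)) ^ 2 := by ring
        _ ≤ (r/(r - 1)) ^ 2 * (M ^ (γ - β) * ε ^ (-((γ - β)/α))) := by
            rw [hKL2]
            exact mul_le_mul_of_nonneg_left hKLγβ (by positivity)
    have hεadd : ε ^ (-2:ℝ) * ε ^ (-((γ - β)/α)) = ε ^ (-2 - (γ - β)/α) := by
      rw [← Real.rpow_add hε]; congr 1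
    have hεγ : ε ^ (-(γ/α)) ≤ ε ^ (-2 - (γ - β)/α) := by
      refine hεmono _ _ ?_
      have h2 : β/α ≤ 2 := (div_le_iff₀ hα).mpr (by linarith)
      have h3 : (γ - β)/α = γ/α - β/α := by ring
      linarith
    calc ∑ ℓ ∈ range (L + 1), (N ℓ : ℝ) * C ℓ
        ≤ 2 * ε ^ (-2:ℝ) * (c₂ * c₃ * T ^ 2)
            + ∑ ℓ ∈ range (L + 1), c₃ * ((I₀:ℝ) * (a:ℝ) ^ ℓ) ^ (γ:ℝ) := hNcost
      _ ≤ 2 * ε ^ (-2:ℝ) * (c₂ * c₃ * ((r/(r - 1)) ^ 2 * (M ^ (γ - β) * ε ^ (-((γ - β)/α)))))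
            + Q * ε ^ (-2 - (γ - β)/α) := by
          refine add_le_add (mul_le_mul_of_nonneg_left
            (mul_le_mul_of_nonneg_left hT2 hc₂c₃.le) (by positivity))
            (hccb.trans (mul_le_mul_of_nonneg_left hεγ hQpos.le))
      _ = P₃ * ε ^ (-2 - (γ - β)/α) := by rw [hP₃def, ← hεadd]; ring
      _ ≤ max P₁ (max P₂ P₃) * ε ^ (-2 - (γ - β)/α) := by
          refine mul_le_mul_of_nonneg_right
            ((le_max_right _ _).trans (le_max_right _ _)) (Real.rpow_pos_of_pos hε _).le
end
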